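/- The function f(x) = E[log(1+xZ)]/E[Z/(1+xZ)] − x, where Z is standard exponential, is continuous and strictly increasing on [0,∞), satisfies f(0) = 0, and f(x) → +∞ as x → +∞. Hence f admits a continuous strictly increasing inverse f^{−1}: [0,∞) → [0,∞). -/

import Mathlib

/-! Write `A = meanLog`, `B = meanRatio` and `C = meanRatioSq` for `E[log(1+xZ)]`, `E[Z/(1+xZ)]`
and `E[(Z/(1+xZ))²]`. Differentiation under the integral gives `A' = B` and `B' = -C`, so
`f' = A C / B² > 0` on `(0, ∞)`. The bounds `A(x) ≥ log(1+x)/e` (integrate over `Z > 1` only) and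
`B(x) ≤ 1/x` give `f(x) ≥ x (A(x) - 1) → ∞`. By the intermediate value theorem `f` maps `[0, ∞)`
onto `[0, ∞)`, and the inverse of the resulting order isomorphism is continuous. -/

open MeasureTheory Set Filter

/-- The water-filling function f(x) = E[log(1+xZ)]/E[Z/(1+xZ)] − x for Z standard exponential. -/
noncomputable def waterfill (x : ℝ) : ℝ :=
  (∫ z in Ioi (0:ℝ), Real.log (1 + x * z) * Real.exp (-z)) /
    (∫ z in Ioi (0:ℝ), (z / (1 + x * z)) * Real.exp (-z)) - x

open Real Topology

theorem StrictMonoOn.exists_continuousOn_inverse_of_image_Ici {α β : Type*}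
    [LinearOrder α] [TopologicalSpace α] [OrderTopology α]
    [LinearOrder β] [TopologicalSpace β] [OrderTopology β]
    {f : α → β} {a : α} {b : β} (hf : StrictMonoOn f (Ici a)) (himage : f '' Ici a = Ici b) :
    ∃ g : β → α, ContinuousOn g (Ici b) ∧ StrictMonoOn g (Ici b) ∧ MapsTo g (Ici b) (Ici a) ∧
      LeftInvOn g f (Ici a) ∧ RightInvOn g f (Ici b) := by
  let e : Ici a ≃o Ici b := (hf.orderIso f _).trans (OrderIso.setCongr _ _ himage)
  have continuous_projIci : Continuous (projIci b) :=
    (continuous_const.max continuous_id).subtype_mk _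
  refine ⟨fun y => e.symm (projIci b y), ?_, ?_, fun y _ => (e.symm _).2, fun x hx => ?_,
    fun y hy => ?_⟩
  · exact (continuous_subtype_val.comp (e.symm.continuous.comp continuous_projIci)).continuousOn
  · exact (Subtype.strictMono_coe _).comp_strictMonoOn
      (e.symm.strictMono.comp_strictMonoOn strictMonoOn_projIci)
  · have : projIci b (f x) = e ⟨x, hx⟩ := projIci_of_mem _
    simp only [this, OrderIso.symm_apply_apply]
  · change f (e.symm (projIci b y)) = y
    rw [projIci_of_mem hy]
    exact congrArg Subtype.val (e.apply_symm_apply ⟨y, hy⟩)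

lemma integrableOn_pow_mul_exp_neg (n : ℕ) :
    IntegrableOn (fun z : ℝ => z ^ n * exp (-z)) (Ioi 0) := by
  simpa [Real.rpow_natCast] using integrableOn_rpow_mul_exp_neg_rpow (s := n) (p := 1)
    (by linarith [n.cast_nonneg (α := ℝ)]) one_pos

lemma integrableOn_id_mul_exp_neg : IntegrableOn (fun z : ℝ => z * exp (-z)) (Ioi 0) := by
  simpa using integrableOn_pow_mul_exp_neg 1

lemma setIntegral_pos_of_forall_pos {α : Type*} [MeasurableSpace α] {μ : Measure α} {s : Set α}
    {f : α → ℝ} (hs : MeasurableSet s) (hμ : μ s ≠ 0) (hf : IntegrableOn f s μ)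
    (hpos : ∀ x ∈ s, 0 < f x) : 0 < ∫ x in s, f x ∂μ := by
  have hsupp : Function.support f ∩ s = s := inter_eq_right.2 fun x hx => (hpos x hx).ne'
  rw [setIntegral_pos_iff_support_of_nonneg_ae (ae_restrict_of_forall_mem hs fun x hx =>
    (hpos x hx).le) hf, hsupp]
  exact pos_iff_ne_zero.2 hμ

lemma norm_mul_exp_neg_le {a b : ℝ} (h : |a| ≤ b) (z : ℝ) : ‖a * exp (-z)‖ ≤ b * exp (-z) := by
  rw [norm_mul, norm_eq_abs, norm_of_nonneg (exp_pos _).le]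
  exact mul_le_mul_of_nonneg_right h (exp_pos _).le

section

variable {x z : ℝ}

lemma one_le_one_add_mul (hx : 0 ≤ x) (hz : 0 ≤ z) : 1 ≤ 1 + x * z :=
  le_add_of_nonneg_right (mul_nonneg hx hz)

lemma abs_log_one_add_mul_le (hx : 0 ≤ x) (hz : 0 ≤ z) : |log (1 + x * z)| ≤ x * z := by
  have h := one_le_one_add_mul hx hz
  rw [abs_of_nonneg (log_nonneg h)]
  linarith [log_le_sub_one_of_pos (one_pos.trans_le h)]

lemma abs_div_one_add_mul_le (hx : 0 ≤ x) (hz : 0 ≤ z) : |z / (1 + x * z)| ≤ z := by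
  rw [abs_of_nonneg (div_nonneg hz (zero_le_one.trans (one_le_one_add_mul hx hz)))]
  exact div_le_self hz (one_le_one_add_mul hx hz)

lemma abs_div_one_add_mul_sq_le (hx : 0 ≤ x) (hz : 0 ≤ z) : |(z / (1 + x * z)) ^ 2| ≤ z ^ 2 := by
  rw [abs_pow]
  exact pow_le_pow_left₀ (abs_nonneg _) (abs_div_one_add_mul_le hx hz) 2

lemma div_one_add_mul_le_inv (hx : 0 < x) (hz : 0 ≤ z) : z / (1 + x * z) ≤ x⁻¹ := by
  rw [div_le_iff₀ (by positivity), inv_mul_eq_div, le_div_iff₀ hx]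
  linarith

lemma hasDerivAt_log_one_add_mul (h : 0 < 1 + x * z) :
    HasDerivAt (fun x => log (1 + x * z)) (z / (1 + x * z)) x := by
  simpa using (((hasDerivAt_id x).mul_const z).const_add 1).log h.ne'

lemma hasDerivAt_div_one_add_mul (h : 0 < 1 + x * z) :
    HasDerivAt (fun x => z / (1 + x * z)) (-(z / (1 + x * z)) ^ 2) x := by
  have hlin : HasDerivAt (fun x => 1 + x * z) z x := by
    simpa using ((hasDerivAt_id x).mul_const z).const_add 1
  refine ((hasDerivAt_const x z).fun_div hlin h.ne').congr_deriv ?_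
  field_simp
  ring

noncomputable def meanLog (x : ℝ) : ℝ := ∫ z in Ioi 0, log (1 + x * z) * exp (-z)

noncomputable def meanRatio (x : ℝ) : ℝ := ∫ z in Ioi 0, z / (1 + x * z) * exp (-z)

noncomputable def meanRatioSq (x : ℝ) : ℝ := ∫ z in Ioi 0, (z / (1 + x * z)) ^ 2 * exp (-z)

lemma waterfill_eq (x : ℝ) : waterfill x = meanLog x / meanRatio x - x := rfl

lemma integrableOn_log_one_add_mul_mul_exp_neg (hx : 0 ≤ x) :
    IntegrableOn (fun z => log (1 + x * z) * exp (-z)) (Ioi 0) := by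
  refine Integrable.mono' (integrableOn_id_mul_exp_neg.const_mul x) (by fun_prop) ?_
  filter_upwards [ae_restrict_mem measurableSet_Ioi] with z hz
  simpa [mul_assoc] using norm_mul_exp_neg_le (abs_log_one_add_mul_le hx (le_of_lt hz)) z

lemma integrableOn_div_one_add_mul_mul_exp_neg (hx : 0 ≤ x) :
    IntegrableOn (fun z => z / (1 + x * z) * exp (-z)) (Ioi 0) := by
  refine Integrable.mono' integrableOn_id_mul_exp_neg (by fun_prop) ?_
  filter_upwards [ae_restrict_mem measurableSet_Ioi] with z hz
  exact norm_mul_exp_neg_le (abs_div_one_add_mul_le hx (le_of_lt hz)) z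

lemma integrableOn_div_one_add_mul_sq_mul_exp_neg (hx : 0 ≤ x) :
    IntegrableOn (fun z => (z / (1 + x * z)) ^ 2 * exp (-z)) (Ioi 0) := by
  refine Integrable.mono' (integrableOn_pow_mul_exp_neg 2) (by fun_prop) ?_
  filter_upwards [ae_restrict_mem measurableSet_Ioi] with z hz
  exact norm_mul_exp_neg_le (abs_div_one_add_mul_sq_le hx (le_of_lt hz)) z

lemma meanLog_pos (hx : 0 < x) : 0 < meanLog x :=
  setIntegral_pos_of_forall_pos measurableSet_Ioi (by simp)
    (integrableOn_log_one_add_mul_mul_exp_neg hx.le) fun z hz =>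
      mul_pos (log_pos (by nlinarith [mem_Ioi.1 hz])) (exp_pos _)

lemma meanRatio_pos (hx : 0 ≤ x) : 0 < meanRatio x :=
  setIntegral_pos_of_forall_pos measurableSet_Ioi (by simp)
    (integrableOn_div_one_add_mul_mul_exp_neg hx) fun z hz =>
      mul_pos (div_pos hz (by nlinarith [mem_Ioi.1 hz])) (exp_pos _)

lemma meanRatioSq_pos (hx : 0 ≤ x) : 0 < meanRatioSq x :=
  setIntegral_pos_of_forall_pos measurableSet_Ioi (by simp)
    (integrableOn_div_one_add_mul_sq_mul_exp_neg hx) fun z hz =>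
      mul_pos (pow_pos (div_pos hz (by nlinarith [mem_Ioi.1 hz])) 2) (exp_pos _)

lemma hasDerivAt_meanLog (hx : 0 < x) : HasDerivAt meanLog (meanRatio x) x := by
  refine (hasDerivAt_integral_of_dominated_loc_of_deriv_le (Ioi_mem_nhds hx)
    (F := fun x z => log (1 + x * z) * exp (-z)) (F' := fun x z => z / (1 + x * z) * exp (-z))
    (Eventually.of_forall fun _ => by fun_prop) (integrableOn_log_one_add_mul_mul_exp_neg hx.le)
    (by fun_prop) ?_ integrableOn_id_mul_exp_neg ?_).2
  · filter_upwards [ae_restrict_mem measurableSet_Ioi] with z hz y hy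
    exact norm_mul_exp_neg_le (abs_div_one_add_mul_le (le_of_lt hy) (le_of_lt hz)) z
  · filter_upwards [ae_restrict_mem measurableSet_Ioi] with z hz y hy
    exact (hasDerivAt_log_one_add_mul
      (by nlinarith [mem_Ioi.1 hz, mem_Ioi.1 hy] : 0 < 1 + y * z)).mul_const _

lemma hasDerivAt_meanRatio (hx : 0 < x) : HasDerivAt meanRatio (-meanRatioSq x) x := by
  have key := (hasDerivAt_integral_of_dominated_loc_of_deriv_le (Ioi_mem_nhds hx)
    (F := fun x z => z / (1 + x * z) * exp (-z))
    (F' := fun x z => -(z / (1 + x * z)) ^ 2 * exp (-z))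
    (Eventually.of_forall fun _ => by fun_prop) (integrableOn_div_one_add_mul_mul_exp_neg hx.le)
    (by fun_prop) ?_ (integrableOn_pow_mul_exp_neg 2) ?_).2
  · simp only [neg_mul, integral_neg] at key
    exact key
  · filter_upwards [ae_restrict_mem measurableSet_Ioi] with z hz y hy
    simpa [abs_neg] using
      norm_mul_exp_neg_le (abs_div_one_add_mul_sq_le (le_of_lt hy) (le_of_lt hz)) z
  · filter_upwards [ae_restrict_mem measurableSet_Ioi] with z hz y hy
    exact (hasDerivAt_div_one_add_mul
      (by nlinarith [mem_Ioi.1 hz, mem_Ioi.1 hy] : 0 < 1 + y * z)).mul_const _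

lemma continuousOn_meanRatio : ContinuousOn meanRatio (Ici 0) := by
  refine continuousOn_of_dominated (fun _ _ => by fun_prop) (fun x hx => ?_)
    integrableOn_id_mul_exp_neg ?_
  · filter_upwards [ae_restrict_mem measurableSet_Ioi] with z hz
    exact norm_mul_exp_neg_le (abs_div_one_add_mul_le hx (le_of_lt hz)) z
  · filter_upwards [ae_restrict_mem measurableSet_Ioi] with z hz
    refine (continuousOn_const.div (by fun_prop) fun x hx => ?_).mul continuousOn_const
    exact (one_pos.trans_le (one_le_one_add_mul hx (le_of_lt hz))).ne'

lemma continuousOn_meanLog_Icc (R : ℝ) : ContinuousOn meanLog (Icc 0 R) := by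
  refine continuousOn_of_dominated (fun _ _ => by fun_prop) (fun x hx => ?_)
    (integrableOn_id_mul_exp_neg.const_mul R) ?_
  · filter_upwards [ae_restrict_mem measurableSet_Ioi] with z hz
    refine (norm_mul_exp_neg_le (abs_log_one_add_mul_le hx.1 (le_of_lt hz)) z).trans ?_
    rw [← mul_assoc]
    exact mul_le_mul_of_nonneg_right (mul_le_mul_of_nonneg_right hx.2 (le_of_lt hz)) (exp_pos _).le
  · filter_upwards [ae_restrict_mem measurableSet_Ioi] with z hz
    refine (ContinuousOn.log (by fun_prop) fun x hx => ?_).mul continuousOn_const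
    exact (one_pos.trans_le (one_le_one_add_mul hx.1 (le_of_lt hz))).ne'

lemma continuousOn_meanLog : ContinuousOn meanLog (Ici 0) := fun x hx => by
  have hnhds : Icc 0 (x + 1) ∈ 𝓝[Ici 0] x := by
    simpa only [Ici_inter_Iic] using inter_mem_nhdsWithin (Ici 0) (Iic_mem_nhds (lt_add_one x))
  exact ((continuousOn_meanLog_Icc (x + 1)).continuousWithinAt ⟨hx, by linarith⟩)
    |>.mono_of_mem_nhdsWithin hnhds

lemma log_one_add_mul_exp_neg_one_le_meanLog (hx : 0 ≤ x) :
    log (1 + x) * exp (-1) ≤ meanLog x := by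
  have hint := integrableOn_log_one_add_mul_mul_exp_neg hx
  calc log (1 + x) * exp (-1) = ∫ z in Ioi 1, log (1 + x) * exp (-z) := by
        rw [integral_const_mul, integral_exp_neg_Ioi]
    _ ≤ ∫ z in Ioi 1, log (1 + x * z) * exp (-z) := by
        refine setIntegral_mono_on ((integrableOn_exp_neg_Ioi 1).const_mul _)
          (hint.mono_set (Ioi_subset_Ioi zero_le_one)) measurableSet_Ioi fun z hz => ?_
        have hz1 : 1 < z := hz
        exact mul_le_mul_of_nonneg_right (log_le_log (by linarith) (by nlinarith)) (exp_pos _).le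
    _ ≤ meanLog x := by
        refine setIntegral_mono_set hint ?_ (Ioi_subset_Ioi zero_le_one).eventuallyLE
        filter_upwards [ae_restrict_mem measurableSet_Ioi] with z hz
        exact mul_nonneg (log_nonneg (one_le_one_add_mul hx (le_of_lt hz))) (exp_pos _).le

lemma meanRatio_le_inv (hx : 0 < x) : meanRatio x ≤ x⁻¹ :=
  calc meanRatio x ≤ ∫ z in Ioi 0, x⁻¹ * exp (-z) :=
        setIntegral_mono_on (integrableOn_div_one_add_mul_mul_exp_neg hx.le)
          ((integrableOn_exp_neg_Ioi 0).const_mul _) measurableSet_Ioi fun z hz =>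
            mul_le_mul_of_nonneg_right (div_one_add_mul_le_inv hx (le_of_lt hz)) (exp_pos _).le
    _ = x⁻¹ := by rw [integral_const_mul, integral_exp_neg_Ioi_zero, mul_one]

lemma tendsto_meanLog_atTop : Tendsto meanLog atTop atTop := by
  refine tendsto_atTop_mono' _ ?_ (Tendsto.atTop_mul_const (exp_pos (-1))
    (tendsto_log_atTop.comp (tendsto_atTop_add_const_left _ 1 tendsto_id)))
  filter_upwards [eventually_ge_atTop 0] with x hx
  exact log_one_add_mul_exp_neg_one_le_meanLog hx

lemma mul_sub_one_le_waterfill (hx : 0 < x) : x * (meanLog x - 1) ≤ waterfill x := by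
  have hA : x * meanLog x ≤ meanLog x / meanRatio x := by
    simpa [div_inv_eq_mul, mul_comm] using
      div_le_div_of_nonneg_left (meanLog_pos hx).le (meanRatio_pos hx.le) (meanRatio_le_inv hx)
  rw [waterfill_eq]
  linarith

lemma tendsto_waterfill_atTop : Tendsto waterfill atTop atTop := by
  refine tendsto_atTop_mono' _ ?_ (tendsto_id.atTop_mul_atTop₀
    (tendsto_atTop_add_const_right _ (-1) tendsto_meanLog_atTop))
  filter_upwards [eventually_gt_atTop 0] with x hx
  simpa [sub_eq_add_neg] using mul_sub_one_le_waterfill hx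

lemma waterfill_zero : waterfill 0 = 0 := by
  simp [waterfill_eq, meanLog]

lemma continuousOn_waterfill : ContinuousOn waterfill (Ici 0) :=
  (continuousOn_meanLog.div continuousOn_meanRatio fun _ hx => (meanRatio_pos hx).ne').sub
    continuousOn_id

lemma hasDerivAt_waterfill (hx : 0 < x) :
    HasDerivAt waterfill (meanLog x * meanRatioSq x / meanRatio x ^ 2) x := by
  have hB := (meanRatio_pos hx.le).ne'
  refine (((hasDerivAt_meanLog hx).div (hasDerivAt_meanRatio hx) hB).sub
    (hasDerivAt_id x)).congr_deriv ?_
  field_simp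
  ring

lemma strictMonoOn_waterfill : StrictMonoOn waterfill (Ici 0) := by
  refine strictMonoOn_of_deriv_pos (convex_Ici 0) continuousOn_waterfill fun x hx => ?_
  rw [interior_Ici] at hx
  rw [(hasDerivAt_waterfill hx).deriv]
  exact div_pos (mul_pos (meanLog_pos hx) (meanRatioSq_pos hx.le)) (pow_pos (meanRatio_pos hx.le) 2)

end

theorem waterfill_strictMono_inverse :
    ContinuousOn waterfill (Ici 0) ∧
    StrictMonoOn waterfill (Ici 0) ∧
    waterfill 0 = 0 ∧
    Tendsto waterfill atTop atTop ∧
    ∃ g : ℝ → ℝ, ContinuousOn g (Ici 0) ∧ StrictMonoOn g (Ici 0) ∧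
      (∀ y ∈ Ici (0:ℝ), g y ∈ Ici (0:ℝ)) ∧
      (∀ x ∈ Ici (0:ℝ), g (waterfill x) = x) ∧
      (∀ y ∈ Ici (0:ℝ), waterfill (g y) = y) := by
  have himage : waterfill '' Ici 0 = Ici 0 := by
    simpa only [waterfill_zero] using strictMonoOn_waterfill.monotoneOn.image_Ici_subset.antisymm
      (intermediate_value_Ici continuousOn_waterfill tendsto_waterfill_atTop)
  exact ⟨continuousOn_waterfill, strictMonoOn_waterfill, waterfill_zero, tendsto_waterfill_atTop,
    strictMonoOn_waterfill.exists_continuousOn_inverse_of_image_Ici himage⟩
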